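/- Let G be a finite group, 0 < η < 1/2, and 0 < ε < min{1, η·k_ε(G)⁻¹·(1−η)⁻²}, where k_ε(G) ≥ 1 is the number of conjugacy classes K of G with |K| < ε|G|. Suppose G is an (ε,η,3)-mixer: for all normal subsets A,B,C of size ≥ ε|G| one has (1−η)|C|/|G| < Prob(A,B,C) < (1+η)|C|/|G|. Set ε' = (ε·k_ε(G)/η)^{1/2}. Then for all subsets A, B, C each of size ≥ ε'|G| with A and B normal in G: (1−2η)|C|/|G| < Prob(A,B,C) < (1+2η)|C|/|G|. -/

import Mathlib

open Finset

/-- `Ncard X Y Z` is the number of pairs `(x,y) ∈ X × Y` with `x * y ∈ Z`. -/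
def Ncard {G : Type*} [Group G] [DecidableEq G] (X Y Z : Finset G) : ℕ :=
  ((X ×ˢ Y).filter (fun p => p.1 * p.2 ∈ Z)).card

/-- `prob X Y Z = Ncard X Y Z / (|X| * |Y|)`. -/
noncomputable def prob {G : Type*} [Group G] [DecidableEq G] (X Y Z : Finset G) : ℝ :=
  (Ncard X Y Z : ℝ) / ((X.card : ℝ) * (Y.card : ℝ))

/-- A normal (conjugation-invariant) finite subset. -/
def IsNormalSet {G : Type*} [Group G] (X : Finset G) : Prop :=
  ∀ h : G, ∀ x ∈ X, h * x * h⁻¹ ∈ X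

/-- `K` is a conjugacy class of `G`. -/
def IsConjClass {G : Type*} [Group G] [Fintype G] [DecidableEq G] (K : Finset G) : Prop :=
  ∃ a : G, K = Finset.univ.filter (fun x => IsConj a x)

section Aux
variable {G : Type*} [Group G] [DecidableEq G]

lemma Ncard_eq_sum (A B Z : Finset G) :
    Ncard A B Z = ∑ c ∈ Z, Ncard A B {c} := by
  classical
  unfold Ncard
  have h1 := Finset.card_eq_sum_card_fiberwise
    (s := (A ×ˢ B).filter (fun p => p.1 * p.2 ∈ Z)) (t := Z) (f := fun p => p.1 * p.2)
    (fun p hp => (Finset.mem_filter.mp hp).2)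
  rw [h1]
  refine Finset.sum_congr rfl fun c hc => ?_
  congr 1
  rw [Finset.filter_filter]
  refine Finset.filter_congr fun p hp => ?_
  simp only [Finset.mem_singleton]
  constructor
  · rintro ⟨_, h⟩; exact h
  · intro h; exact ⟨h ▸ hc, h⟩

lemma Ncard_le (A B Z : Finset G) : Ncard A B Z ≤ B.card * Z.card := by
  classical
  have : Ncard A B Z ≤ (B ×ˢ Z).card := by
    apply Finset.card_le_card_of_injOn (fun p => (p.2, p.1 * p.2))
    · intro p hp
      simp only [Finset.mem_coe, Finset.mem_filter, Finset.mem_product] at hp ⊢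
      exact ⟨hp.1.2, hp.2⟩
    · intro p hp q hq h
      simp only [Prod.mk.injEq] at h
      have h2 := h.2
      rw [h.1] at h2
      exact Prod.ext (mul_right_cancel h2) h.1
  simpa [Finset.card_product] using this

lemma Ncard_singleton_conj {A B : Finset G} (hAn : IsNormalSet A) (hBn : IsNormalSet B)
    (g c : G) : Ncard A B {g * c * g⁻¹} = Ncard A B {c} := by
  classical
  unfold Ncard
  apply Finset.card_bij' (fun p _ => (g⁻¹ * p.1 * g, g⁻¹ * p.2 * g))
    (fun p _ => (g * p.1 * g⁻¹, g * p.2 * g⁻¹))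
  · intro p hp
    simp only [Finset.mem_filter, Finset.mem_product, Finset.mem_singleton] at hp ⊢
    refine ⟨⟨?_, ?_⟩, ?_⟩
    · simpa using hAn g⁻¹ p.1 hp.1.1
    · simpa using hBn g⁻¹ p.2 hp.1.2
    · rw [show (g⁻¹ * p.1 * g) * (g⁻¹ * p.2 * g) = g⁻¹ * (p.1 * p.2) * g by group, hp.2]
      group
  · intro p hp
    simp only [Finset.mem_filter, Finset.mem_product, Finset.mem_singleton] at hp ⊢
    refine ⟨⟨hAn g p.1 hp.1.1, hBn g p.2 hp.1.2⟩, ?_⟩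
    rw [show (g * p.1 * g⁻¹) * (g * p.2 * g⁻¹) = g * (p.1 * p.2) * g⁻¹ by group, hp.2]
  · intro p hp
    ext <;> simp <;> group
  · intro p hp
    ext <;> simp <;> group

lemma Ncard_singleton_of_isConj {A B : Finset G} (hAn : IsNormalSet A) (hBn : IsNormalSet B)
    {c x : G} (h : IsConj c x) : Ncard A B {x} = Ncard A B {c} := by
  obtain ⟨g, hg⟩ := isConj_iff.mp h
  rw [← hg]
  exact Ncard_singleton_conj hAn hBn g c

variable [Fintype G]

lemma isNormalSet_class (a : G) :
    IsNormalSet (Finset.univ.filter (fun x => IsConj a x)) := by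
  intro h x hx
  simp only [Finset.mem_filter, Finset.mem_univ, true_and] at hx ⊢
  exact hx.trans (isConj_iff.mpr ⟨h, rfl⟩)

lemma Ncard_class {A B : Finset G} (hAn : IsNormalSet A) (hBn : IsNormalSet B) (c : G) :
    Ncard A B (Finset.univ.filter (fun x => IsConj c x))
      = (Finset.univ.filter (fun x => IsConj c x)).card * Ncard A B {c} := by
  rw [Ncard_eq_sum]
  rw [Finset.sum_congr rfl (fun x hx => Ncard_singleton_of_isConj hAn hBn
    ((Finset.mem_filter.mp hx).2))]
  rw [Finset.sum_const, smul_eq_mul]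

lemma classes_eq_of_mem {K L : Finset G} (hK : IsConjClass K) (hL : IsConjClass L)
    {z : G} (hzK : z ∈ K) (hzL : z ∈ L) : K = L := by
  obtain ⟨a, rfl⟩ := hK
  obtain ⟨b, rfl⟩ := hL
  simp only [Finset.mem_filter, Finset.mem_univ, true_and] at hzK hzL
  ext w
  simp only [Finset.mem_filter, Finset.mem_univ, true_and]
  constructor
  · intro h; exact (hzL.trans hzK.symm).trans h
  · intro h; exact (hzK.trans hzL.symm).trans h

end Aux

set_option maxHeartbeats 1000000 in
theorem stmt13 {G : Type*} [Group G] [Fintype G] [DecidableEq G]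
    (η ε : ℝ) (hη : 0 < η) (hη2 : η < 1 / 2) (hε : 0 < ε)
    (keps : ℕ)
    (hkeps : keps = Set.ncard
      {K : Finset G | IsConjClass K ∧ (K.card : ℝ) < ε * (Fintype.card G : ℝ)})
    (hkeps1 : 1 ≤ keps)
    (hεlt : ε < min 1 (η * ((keps : ℝ))⁻¹ * ((1 - η) ^ 2)⁻¹))
    (hmixer : ∀ A B C : Finset G, IsNormalSet A → IsNormalSet B → IsNormalSet C →
      ε * (Fintype.card G : ℝ) ≤ (A.card : ℝ) →
      ε * (Fintype.card G : ℝ) ≤ (B.card : ℝ) →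
      ε * (Fintype.card G : ℝ) ≤ (C.card : ℝ) →
      (1 - η) * ((C.card : ℝ) / (Fintype.card G : ℝ)) < prob A B C ∧
      prob A B C < (1 + η) * ((C.card : ℝ) / (Fintype.card G : ℝ)))
    (A B C : Finset G) (hAn : IsNormalSet A) (hBn : IsNormalSet B)
    (hA : Real.sqrt (ε * (keps : ℝ) / η) * (Fintype.card G : ℝ) ≤ (A.card : ℝ))
    (hB : Real.sqrt (ε * (keps : ℝ) / η) * (Fintype.card G : ℝ) ≤ (B.card : ℝ))
    (hC : Real.sqrt (ε * (keps : ℝ) / η) * (Fintype.card G : ℝ) ≤ (C.card : ℝ)) :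
    (1 - 2 * η) * ((C.card : ℝ) / (Fintype.card G : ℝ)) < prob A B C ∧
    prob A B C < (1 + 2 * η) * ((C.card : ℝ) / (Fintype.card G : ℝ)) := by
  classical
  set N : ℝ := (Fintype.card G : ℝ) with hNdef
  set ε' : ℝ := Real.sqrt (ε * (keps : ℝ) / η) with hε'def
  have hN0 : (0:ℝ) < N := by
    rw [hNdef]; exact_mod_cast Fintype.card_pos_iff.mpr ⟨1⟩
  have hkpos : (0:ℝ) < (keps:ℝ) := by exact_mod_cast hkeps1
  have hk1 : (1:ℝ) ≤ (keps:ℝ) := by exact_mod_cast hkeps1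
  have hε'sq : ε' ^ 2 = ε * (keps:ℝ) / η := Real.sq_sqrt (by positivity)
  have hε'pos : 0 < ε' := Real.sqrt_pos.mpr (by positivity)
  have hε1 : ε < 1 := lt_of_lt_of_le hεlt (min_le_left _ _)
  have hεη : ε < η * ((keps:ℝ))⁻¹ * ((1 - η) ^ 2)⁻¹ := lt_of_lt_of_le hεlt (min_le_right _ _)
  have h1η : (0:ℝ) < 1 - η := by linarith
  have hεη' : ε * ((keps:ℝ) * (1 - η)^2) < η := by
    have h0 : η * ((keps:ℝ))⁻¹ * ((1 - η) ^ 2)⁻¹ = η / ((keps:ℝ) * (1-η)^2) := by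
      field_simp
    rw [h0] at hεη
    exact (lt_div_iff₀ (by positivity)).mp hεη
  have hkey0 : η * ε'^2 = ε * (keps:ℝ) := by
    rw [hε'sq]; field_simp
  -- ε ≤ ε'
  have hεε' : ε ≤ ε' := by
    have h2 : ε^2 < ε'^2 := by nlinarith
    nlinarith
  have habpos : (0:ℝ) < (A.card:ℝ) * (B.card:ℝ) := by
    have hA0 : (0:ℝ) < (A.card:ℝ) := lt_of_lt_of_le (by positivity) hA
    have hB0 : (0:ℝ) < (B.card:ℝ) := lt_of_lt_of_le (by positivity) hB
    exact mul_pos hA0 hB0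
  have haε : ε * N ≤ (A.card:ℝ) :=
    le_trans (mul_le_mul_of_nonneg_right hεε' hN0.le) hA
  have hbε : ε * N ≤ (B.card:ℝ) :=
    le_trans (mul_le_mul_of_nonneg_right hεε' hN0.le) hB
  -- small / big split of C
  set Kc : G → Finset G := fun c => Finset.univ.filter (fun x => IsConj c x) with hKcdef
  set Cs : Finset G := C.filter (fun c => ((Kc c).card : ℝ) < ε * N) with hCsdef
  set Cb : Finset G := C.filter (fun c => ¬ ((Kc c).card : ℝ) < ε * N) with hCbdef
  have hsplitcard : Cs.card + Cb.card = C.card :=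
    Finset.card_filter_add_card_filter_not _
  have hNsplit : Ncard A B C = Ncard A B Cs + Ncard A B Cb := by
    rw [Ncard_eq_sum A B C, Ncard_eq_sum A B Cs, Ncard_eq_sum A B Cb]
    exact (Finset.sum_filter_add_sum_filter_not C _ _).symm
  -- bound on |Cs|
  set SS : Finset (Finset G) :=
    Finset.univ.filter (fun K : Finset G => IsConjClass K ∧ (K.card:ℝ) < ε * N) with hSSdef
  have hSScard : (keps:ℝ) = (SS.card:ℝ) := by
    have h1 : {K : Finset G | IsConjClass K ∧ (K.card : ℝ) < ε * N} = ↑SS := by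
      ext K; simp [hSSdef]
    rw [hkeps, h1, Set.ncard_coe_finset]
  have hCsbound : (Cs.card:ℝ) ≤ (keps:ℝ) * (ε * N) := by
    have hsub : Cs ⊆ SS.biUnion id := by
      intro c hc
      rw [hCsdef, Finset.mem_filter] at hc
      refine Finset.mem_biUnion.mpr ⟨Kc c, ?_, ?_⟩
      · rw [hSSdef, Finset.mem_filter]
        exact ⟨Finset.mem_univ _, ⟨c, rfl⟩, hc.2⟩
      · exact Finset.mem_filter.mpr ⟨Finset.mem_univ c, IsConj.refl c⟩
    have hdisj : ∀ x ∈ SS, ∀ y ∈ SS, x ≠ y → Disjoint (id x) (id y) := by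
      intro x hx y hy hxy
      rw [hSSdef, Finset.mem_filter] at hx hy
      by_contra hnd
      obtain ⟨z, hzx, hzy⟩ := Finset.not_disjoint_iff.mp hnd
      exact hxy (classes_eq_of_mem hx.2.1 hy.2.1 hzx hzy)
    have h1 : Cs.card ≤ ∑ K ∈ SS, K.card := by
      calc Cs.card ≤ (SS.biUnion id).card := Finset.card_le_card hsub
        _ = ∑ K ∈ SS, (id K).card := Finset.card_biUnion hdisj
        _ = ∑ K ∈ SS, K.card := rfl
    have h2 : (Cs.card:ℝ) ≤ ∑ K ∈ SS, (K.card:ℝ) := by exact_mod_cast h1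
    have h3 : ∑ K ∈ SS, (K.card:ℝ) ≤ SS.card • (ε * N) := by
      apply Finset.sum_le_card_nsmul
      intro K hK
      rw [hSSdef, Finset.mem_filter] at hK
      exact hK.2.2.le
    rw [nsmul_eq_mul] at h3
    calc (Cs.card:ℝ) ≤ (SS.card:ℝ) * (ε * N) := le_trans h2 h3
      _ = (keps:ℝ) * (ε * N) := by rw [hSScard]
  -- per-element bounds on big part
  have key : ∀ c ∈ Cb,
      (1 - η) * ((A.card:ℝ) * (B.card:ℝ)) < (Ncard A B {c} : ℝ) * N ∧
      (Ncard A B {c} : ℝ) * N < (1 + η) * ((A.card:ℝ) * (B.card:ℝ)) := by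
    intro c hc
    rw [hCbdef, Finset.mem_filter] at hc
    have hKbig : ε * N ≤ ((Kc c).card : ℝ) := not_lt.mp hc.2
    have hmix := hmixer A B (Kc c) hAn hBn (isNormalSet_class c) haε hbε hKbig
    have hc_mem : c ∈ Kc c :=
      Finset.mem_filter.mpr ⟨Finset.mem_univ c, IsConj.refl c⟩
    have hK0 : (0:ℝ) < ((Kc c).card : ℝ) := by
      exact_mod_cast Finset.card_pos.mpr ⟨c, hc_mem⟩
    have hprob : prob A B (Kc c)
        = (((Kc c).card : ℝ) * (Ncard A B {c} : ℝ)) / ((A.card:ℝ) * (B.card:ℝ)) := by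
      rw [prob, Ncard_class hAn hBn c]
      push_cast
      ring
    rw [hprob] at hmix
    obtain ⟨hlo, hhi⟩ := hmix
    rw [← mul_div_assoc, div_lt_div_iff₀ hN0 habpos] at hlo
    rw [← mul_div_assoc, div_lt_div_iff₀ habpos hN0] at hhi
    constructor
    · refine lt_of_mul_lt_mul_left ?_ hK0.le
      calc ((Kc c).card:ℝ) * ((1 - η) * ((A.card:ℝ) * (B.card:ℝ)))
          = (1 - η) * ((Kc c).card:ℝ) * ((A.card:ℝ) * (B.card:ℝ)) := by ring
        _ < ((Kc c).card:ℝ) * (Ncard A B {c} : ℝ) * N := hlo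
        _ = ((Kc c).card:ℝ) * ((Ncard A B {c} : ℝ) * N) := by ring
    · refine lt_of_mul_lt_mul_left ?_ hK0.le
      calc ((Kc c).card:ℝ) * ((Ncard A B {c} : ℝ) * N)
          = ((Kc c).card:ℝ) * (Ncard A B {c} : ℝ) * N := by ring
        _ < (1 + η) * ((Kc c).card:ℝ) * ((A.card:ℝ) * (B.card:ℝ)) := hhi
        _ = ((Kc c).card:ℝ) * ((1 + η) * ((A.card:ℝ) * (B.card:ℝ))) := by ring
  -- Cb is nonempty
  have hCbne : Cb.Nonempty := by
    rw [Finset.nonempty_iff_ne_empty]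
    intro hemp
    have h1 : Cs.card = C.card := by
      rw [← hsplitcard, hemp]; simp
    have h2 : ε' * N ≤ (keps:ℝ) * (ε * N) := by
      calc ε' * N ≤ (C.card:ℝ) := hC
        _ = (Cs.card:ℝ) := by rw [h1]
        _ ≤ (keps:ℝ) * (ε * N) := hCsbound
    have h3 : ε' ≤ (keps:ℝ) * ε := by
      have := (mul_le_mul_iff_of_pos_right hN0).mp (by linarith [h2] : ε' * N ≤ ((keps:ℝ) * ε) * N)
      exact this
    have h4' : ε' ≤ η * ε'^2 := by rw [hkey0]; linarith
    have h4 : (1:ℝ) ≤ η * ε' := by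
      have h5 : ε' * 1 ≤ ε' * (η * ε') := by calc ε' * 1 = ε' := by ring
                                               _ ≤ η * ε'^2 := h4'
                                               _ = ε' * (η * ε') := by ring
      exact le_of_mul_le_mul_left h5 hε'pos
    have h6 : η * (ε * (keps:ℝ)) < 1 := by
      have t1 : η * (ε * ((keps:ℝ) * (1-η)^2)) < η * η := by
        exact mul_lt_mul_of_pos_left hεη' hη
      have t2 : η^2 < (1-η)^2 := by
        have e : (1-η)^2 = 1 - 2*η + η^2 := by ring
        rw [e]; linarith
      have t3 : (η * (ε * (keps:ℝ))) * (1-η)^2 < 1 * (1-η)^2 := by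
        calc (η * (ε * (keps:ℝ))) * (1-η)^2 = η * (ε * ((keps:ℝ) * (1-η)^2)) := by ring
          _ < η * η := t1
          _ = η^2 := by ring
          _ < (1-η)^2 := t2
          _ = 1 * (1-η)^2 := by ring
      exact lt_of_mul_lt_mul_right t3 (pow_pos h1η 2).le
    have h7 : (η * ε')^2 < 1 := by
      have : (η * ε')^2 = η * (η * ε'^2) := by ring
      rw [this, hkey0]
      exact h6
    have h8 : (1:ℝ) ≤ (η * ε')^2 := by
      calc (1:ℝ) = 1 * 1 := by ring
        _ ≤ (η * ε') * (η * ε') := mul_le_mul h4 h4 zero_le_one (le_trans zero_le_one h4)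
        _ = (η * ε')^2 := by ring
    linarith
  -- sum bounds for Ncard A B Cb
  have hCblo : (Cb.card:ℝ) * ((1 - η) * ((A.card:ℝ) * (B.card:ℝ)))
      < (Ncard A B Cb : ℝ) * N := by
    rw [Ncard_eq_sum A B Cb]
    push_cast
    rw [Finset.sum_mul]
    calc (Cb.card:ℝ) * ((1 - η) * ((A.card:ℝ) * (B.card:ℝ)))
        = ∑ _c ∈ Cb, (1 - η) * ((A.card:ℝ) * (B.card:ℝ)) := by
          rw [Finset.sum_const, nsmul_eq_mul]
      _ < ∑ c ∈ Cb, (Ncard A B {c} : ℝ) * N :=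
          Finset.sum_lt_sum_of_nonempty hCbne (fun c hc => (key c hc).1)
  have hCbhi : (Ncard A B Cb : ℝ) * N
      < (Cb.card:ℝ) * ((1 + η) * ((A.card:ℝ) * (B.card:ℝ))) := by
    rw [Ncard_eq_sum A B Cb]
    push_cast
    rw [Finset.sum_mul]
    calc ∑ c ∈ Cb, (Ncard A B {c} : ℝ) * N
        < ∑ _c ∈ Cb, (1 + η) * ((A.card:ℝ) * (B.card:ℝ)) :=
          Finset.sum_lt_sum_of_nonempty hCbne (fun c hc => (key c hc).2)
      _ = (Cb.card:ℝ) * ((1 + η) * ((A.card:ℝ) * (B.card:ℝ))) := by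
          rw [Finset.sum_const, nsmul_eq_mul]
  -- Ncard A B Cs bounds
  have hCsN : (Ncard A B Cs : ℝ) ≤ (B.card:ℝ) * (Cs.card:ℝ) := by
    exact_mod_cast Ncard_le A B Cs
  -- cast card relations
  have hsplitcardR : (Cs.card:ℝ) + (Cb.card:ℝ) = (C.card:ℝ) := by exact_mod_cast hsplitcard
  have hNsplitR : (Ncard A B C : ℝ) = (Ncard A B Cs : ℝ) + (Ncard A B Cb : ℝ) := by
    exact_mod_cast hNsplit
  have hCs0 : (0:ℝ) ≤ (Cs.card:ℝ) := by positivity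
  have hCb0 : (0:ℝ) ≤ (Cb.card:ℝ) := by positivity
  have hCc0 : (0:ℝ) ≤ (C.card:ℝ) := by positivity
  have hB0 : (0:ℝ) ≤ (B.card:ℝ) := by positivity
  -- key scalar inequality for lower bound
  have hkey1 : (1 - η) * ((keps:ℝ) * ε) ≤ η * ε' := by
    have h2 : ((1 - η) * ((keps:ℝ) * ε))^2 ≤ (η * ε')^2 := by
      nlinarith [mul_pos (sub_pos.mpr hεη') (mul_pos hkpos hε)]
    exact le_of_pow_le_pow_left₀ two_ne_zero (by positivity) h2
  have hkey2 : (1 - η) * (Cs.card:ℝ) ≤ η * (C.card:ℝ) := by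
    calc (1 - η) * (Cs.card:ℝ) ≤ (1 - η) * ((keps:ℝ) * (ε * N)) := by
          exact mul_le_mul_of_nonneg_left hCsbound h1η.le
      _ = ((1 - η) * ((keps:ℝ) * ε)) * N := by ring
      _ ≤ (η * ε') * N := mul_le_mul_of_nonneg_right hkey1 hN0.le
      _ = η * (ε' * N) := by ring
      _ ≤ η * (C.card:ℝ) := mul_le_mul_of_nonneg_left hC hη.le
  -- slack for upper bound
  have hslack : (Ncard A B Cs : ℝ) * N ≤ η * (C.card:ℝ) * ((A.card:ℝ) * (B.card:ℝ)) := by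
    have e1 : (Cs.card:ℝ) ≤ η * ε'^2 * N := by
      calc (Cs.card:ℝ) ≤ (keps:ℝ) * (ε * N) := hCsbound
        _ = (ε * (keps:ℝ)) * N := by ring
        _ = η * ε'^2 * N := by rw [← hkey0]
    calc (Ncard A B Cs : ℝ) * N ≤ ((B.card:ℝ) * (Cs.card:ℝ)) * N := by
          exact mul_le_mul_of_nonneg_right hCsN hN0.le
      _ ≤ ((B.card:ℝ) * (η * ε'^2 * N)) * N := by
          exact mul_le_mul_of_nonneg_right (mul_le_mul_of_nonneg_left e1 hB0) hN0.le
      _ = η * (ε' * N) * ((ε' * N) * (B.card:ℝ)) := by ring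
      _ ≤ η * (C.card:ℝ) * ((ε' * N) * (B.card:ℝ)) := by
          apply mul_le_mul_of_nonneg_right (mul_le_mul_of_nonneg_left hC hη.le)
          positivity
      _ ≤ η * (C.card:ℝ) * ((A.card:ℝ) * (B.card:ℝ)) := by
          apply mul_le_mul_of_nonneg_left
          · exact mul_le_mul_of_nonneg_right hA hB0
          · positivity
  constructor
  · -- lower bound
    rw [prob, ← mul_div_assoc, div_lt_div_iff₀ hN0 habpos]
    have hsplitη : η * (Cs.card:ℝ) + η * (Cb.card:ℝ) = η * (C.card:ℝ) := by
      rw [← hsplitcardR]; ring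
    have h1 : (1 - 2*η) * (C.card:ℝ) ≤ (1 - η) * (Cb.card:ℝ) := by
      linarith [hkey2, hsplitcardR, hsplitη]
    have h2 : (1 - 2*η) * (C.card:ℝ) * ((A.card:ℝ) * (B.card:ℝ))
        ≤ (1 - η) * (Cb.card:ℝ) * ((A.card:ℝ) * (B.card:ℝ)) :=
      mul_le_mul_of_nonneg_right h1 habpos.le
    have h3 : (0:ℝ) ≤ (Ncard A B Cs : ℝ) * N := by positivity
    rw [hNsplitR]
    linarith [h2, hCblo, h3]
  · -- upper bound
    rw [prob, ← mul_div_assoc, div_lt_div_iff₀ habpos hN0]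
    have h1 : (Cb.card:ℝ) * ((1 + η) * ((A.card:ℝ) * (B.card:ℝ)))
        ≤ (C.card:ℝ) * ((1 + η) * ((A.card:ℝ) * (B.card:ℝ))) := by
      apply mul_le_mul_of_nonneg_right _ (by positivity)
      linarith
    rw [hNsplitR]
    linarith [h1, hCbhi, hslack]
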